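/- arXiv:1606.02698 — 2 statements merged into one kernel-verified Lean document; each statement's English description precedes it below -/
import Mathlib

section
/- Let d : X × X × (0,∞) → ℝ be such that for fixed τ, d(·,·,τ) is a metric on X, and suppose there is C > 0 with: for all x₁, x₂ ∈ X and τ ≥ 1, either d(x₁,x₂,τ)/√τ < C or τ ↦ d(x₁,x₂,τ)/√τ is differentiable at τ with nonpositive derivative. If D := sup_{x₁,x₂} d(x₁,x₂,1) < ∞ and each d(x₁,x₂,·) is continuous, then sup_{x₁,x₂} d(x₁,x₂,τ) ≤ max{D, C}·√τ for all τ ≥ 1. -/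
/-!
Put `f τ = d(x₁, x₂, τ) / √τ` and `M = max D C`. Where `f < M` the truncation `max f M` is locally
constant, and where `f ≥ M` the derivative of `f` is nonpositive, so `max f M` has nonpositive
upper right Dini derivative everywhere. A continuous function with that property is
non-increasing, hence `max f M ≤ max (f 1) M = M` on `[1, ∞)`.
-/

open Set Filter Topology

lemma eventually_slope_max_const_lt {f : ℝ → ℝ} {M x r : ℝ}
    (hf : ContinuousWithinAt f (Ioi x) x) (hr : 0 < r)
    (hx : f x < M ∨ (DifferentiableAt ℝ f x ∧ deriv f x ≤ 0)) :
    ∀ᶠ z in 𝓝[>] x, slope (fun t => max (f t) M) x z < r := by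
  rcases lt_or_ge (f x) M with hlt | hge
  · filter_upwards [hf.eventually_lt_const hlt] with z hz
    simp [slope_def_field, max_eq_right hz.le, max_eq_right hlt.le, hr]
  · obtain ⟨hdiff, hderiv⟩ := hx.resolve_left hge.not_gt
    have hslope := (hasDerivAt_iff_tendsto_slope_left_right.mp hdiff.hasDerivAt).2
    filter_upwards [hslope.eventually_lt_const (hderiv.trans_lt hr), self_mem_nhdsWithin]
      with z hz (hxz : x < z)
    have hgap : 0 < r * (z - x) := mul_pos hr (sub_pos.2 hxz)
    rw [slope_def_field, div_lt_iff₀ (sub_pos.2 hxz)] at hz ⊢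
    rw [max_eq_left hge, sub_lt_iff_lt_add, max_lt_iff]
    constructor <;> linarith

theorem le_of_forall_lt_or_deriv_nonpos {f : ℝ → ℝ} {a M : ℝ} (hf : ContinuousOn f (Ici a))
    (ha : f a ≤ M) (hdich : ∀ t, a ≤ t → f t < M ∨ (DifferentiableAt ℝ f t ∧ deriv f t ≤ 0))
    {t : ℝ} (ht : a ≤ t) : f t ≤ M := by
  have hcap : ∀ x ∈ Icc a t, max (f x) M ≤ M :=
    image_le_of_liminf_slope_right_le_deriv_boundary (B' := 0)
      ((hf.mono Icc_subset_Ici_self).sup continuousOn_const) (max_le ha le_rfl)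
      continuousOn_const (fun x _ => hasDerivWithinAt_const x _ M)
      fun x hx r hr => (eventually_slope_max_const_lt
        ((hf x hx.1).mono fun _ hz => hx.1.trans (le_of_lt hz)) hr (hdich x hx.1)).frequently
  exact (le_max_left _ _).trans (hcap t ⟨ht, le_rfl⟩)

theorem stmt_11_general {X : Type*} (d : X → X → ℝ → ℝ) (C D : ℝ)
    (hdich : ∀ x y : X, ∀ τ : ℝ, 1 ≤ τ →
      d x y τ / Real.sqrt τ < C ∨
      (DifferentiableAt ℝ (fun t => d x y t / Real.sqrt t) τ ∧
        deriv (fun t => d x y t / Real.sqrt t) τ ≤ 0))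
    (hD : ∀ x y : X, d x y 1 ≤ D)
    (hcont : ∀ x y : X, Continuous (fun τ => d x y τ)) :
    ∀ τ : ℝ, 1 ≤ τ → ∀ x y : X, d x y τ ≤ max D C * Real.sqrt τ := by
  intro τ hτ x y
  have hsqrt : 0 < Real.sqrt τ := Real.sqrt_pos.2 (by linarith)
  have hrescaled : d x y τ / Real.sqrt τ ≤ max D C := by
    refine le_of_forall_lt_or_deriv_nonpos (f := fun t => d x y t / Real.sqrt t) ?_ ?_ ?_ hτ
    · exact (hcont x y).continuousOn.div Real.continuous_sqrt.continuousOn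
        fun t ht => (Real.sqrt_pos.2 (zero_lt_one.trans_le ht)).ne'
    · simpa using (hD x y).trans (le_max_left D C)
    · exact fun t ht => (hdich x y t ht).imp_left fun h => h.trans_le (le_max_right D C)
  exact (div_le_iff₀ hsqrt).1 hrescaled

theorem stmt_11 {X : Type*} (d : X → X → ℝ → ℝ) (C D : ℝ) (hC : 0 < C)
    (hrefl : ∀ x : X, ∀ τ : ℝ, 0 < τ → d x x τ = 0)
    (hsep : ∀ x y : X, ∀ τ : ℝ, 0 < τ → d x y τ = 0 → x = y)
    (hsymm : ∀ x y : X, ∀ τ : ℝ, 0 < τ → d x y τ = d y x τ)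
    (htri : ∀ x y z : X, ∀ τ : ℝ, 0 < τ → d x z τ ≤ d x y τ + d y z τ)
    (hdich : ∀ x y : X, ∀ τ : ℝ, 1 ≤ τ →
      d x y τ / Real.sqrt τ < C ∨
      (DifferentiableAt ℝ (fun t => d x y t / Real.sqrt t) τ ∧
        deriv (fun t => d x y t / Real.sqrt t) τ ≤ 0))
    (hD : ∀ x y : X, d x y 1 ≤ D)
    (hcont : ∀ x y : X, Continuous (fun τ => d x y τ)) :
    ∀ τ : ℝ, 1 ≤ τ → ∀ x y : X, d x y τ ≤ max D C * Real.sqrt τ :=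
  stmt_11_general d C D hdich hD hcont
end

section
/- Let h : [1, ∞) → ℝ be continuous, and suppose for each τ in (1,∞) with h(τ) ≥ C (where C > 0 is fixed), h is differentiable at τ with h'(τ) ≤ 0. Then h(τ) ≤ max{h(1), C} for all τ ≥ 1. -/
/-! Let `s` be the last time in `[a, b]` at which `f ≤ max (f a) c`. On `(s, b]` the function
stays above `c`, so its derivative is nonpositive there and `f` is antitone on `[s, b]`;
hence `f b ≤ f s ≤ max (f a) c`. -/

open Set

theorem ContinuousOn.exists_mem_Icc_le_and_lt_on_Ioc
    {α β : Type*} [ConditionallyCompleteLinearOrder α] [TopologicalSpace α] [OrderTopology α]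
    [LinearOrder β] [TopologicalSpace β] [OrderClosedTopology β]
    {f : α → β} {a b : α} {M : β} (hab : a ≤ b) (hf : ContinuousOn f (Icc a b))
    (ha : f a ≤ M) : ∃ s ∈ Icc a b, f s ≤ M ∧ ∀ x ∈ Ioc s b, M < f x := by
  set S := Icc a b ∩ f ⁻¹' Iic M
  have hS : IsCompact S :=
    isCompact_Icc.of_isClosed_subset (hf.preimage_isClosed_of_isClosed isClosed_Icc isClosed_Iic)
      inter_subset_left
  obtain ⟨hs, hfs⟩ : sSup S ∈ S := hS.sSup_mem ⟨a, ⟨le_rfl, hab⟩, ha⟩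
  refine ⟨sSup S, hs, hfs, fun x hx => lt_of_not_ge fun hfx => ?_⟩
  exact hx.1.not_ge (le_csSup hS.bddAbove ⟨⟨hs.1.trans hx.1.le, hx.2⟩, hfx⟩)

theorem image_le_max_of_deriv_nonpos_above {f : ℝ → ℝ} {a b c : ℝ} (hab : a ≤ b)
    (hf : ContinuousOn f (Icc a b))
    (hderiv : ∀ x ∈ Ioo a b, c < f x → DifferentiableAt ℝ f x ∧ deriv f x ≤ 0) :
    f b ≤ max (f a) c := by
  obtain ⟨s, ⟨has, hsb⟩, hfs, habove⟩ :=
    hf.exists_mem_Icc_le_and_lt_on_Ioc hab (le_max_left (f a) c)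
  have hderiv' : ∀ x ∈ interior (Icc s b), DifferentiableAt ℝ f x ∧ deriv f x ≤ 0 := by
    rw [interior_Icc]
    exact fun x hx => hderiv x ⟨has.trans_lt hx.1, hx.2⟩
      ((le_max_right _ _).trans_lt (habove x ⟨hx.1, hx.2.le⟩))
  have hanti : AntitoneOn f (Icc s b) :=
    antitoneOn_of_deriv_nonpos (convex_Icc s b) (hf.mono (Icc_subset_Icc_left has))
      (fun x hx => (hderiv' x hx).1.differentiableWithinAt) (fun x hx => (hderiv' x hx).2)
  exact (hanti ⟨le_rfl, hsb⟩ ⟨hsb, le_rfl⟩ hsb).trans hfs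

theorem stmt_12_general (h : ℝ → ℝ) (C : ℝ)
    (hcont : ContinuousOn h (Set.Ici 1))
    (hder : ∀ τ : ℝ, 1 < τ → h τ ≥ C →
      DifferentiableAt ℝ h τ ∧ deriv h τ ≤ 0) :
    ∀ τ : ℝ, 1 ≤ τ → h τ ≤ max (h 1) C := fun τ hτ =>
  image_le_max_of_deriv_nonpos_above hτ (hcont.mono Icc_subset_Ici_self)
    fun x hx hCx => hder x hx.1 hCx.le

theorem stmt_12 (h : ℝ → ℝ) (C : ℝ) (hC : 0 < C)
    (hcont : ContinuousOn h (Set.Ici 1))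
    (hder : ∀ τ : ℝ, 1 < τ → h τ ≥ C →
      DifferentiableAt ℝ h τ ∧ deriv h τ ≤ 0) :
    ∀ τ : ℝ, 1 ≤ τ → h τ ≤ max (h 1) C :=
  stmt_12_general h C hcont hder
end
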